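/- For every integer n ≥ 2 and all x, s ∈ ℝ^n one has (1/2)·[λ2(x)λ4(s) + λ4(x)λ2(s)] ≤ Tr(x ◇ s) − λ1(x)λ1(s) ≤ (1/2)·[λ2(x)λ2(s) + λ4(x)λ4(s)]. -/

import Mathlib

noncomputable section

open Real Finset

/-- Euclidean dot product of two vectors in `ℝ^n`. -/
def dotp {n : ℕ} (x y : Fin n → ℝ) : ℝ := ∑ i, x i * y i

/-- Euclidean norm of a vector in `ℝ^n`. -/
def euclNorm {n : ℕ} (x : Fin n → ℝ) : ℝ := Real.sqrt (∑ i, (x i) ^ 2)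

/-- The tail `x̄ = (x_3, …, x_n)` of a vector, embedded back into `ℝ^n`
(first two coordinates replaced by `0`). Indices are 0-based, so the tail
consists of the coordinates with index `≥ 2`. -/
def tl {n : ℕ} (x : Fin (n + 2) → ℝ) : Fin (n + 2) → ℝ :=
  fun i => if 2 ≤ (i : ℕ) then x i else 0

/-- The eigenvalue `λ1(x) = x_1 - x_2`. -/
def lam1 {n : ℕ} (x : Fin (n + 2) → ℝ) : ℝ := x 0 - x 1

/-- The eigenvalue `λ2(x) = x_1 + x_2 - √2 ‖x̄‖`. -/
def lam2 {n : ℕ} (x : Fin (n + 2) → ℝ) : ℝ := x 0 + x 1 - Real.sqrt 2 * euclNorm (tl x)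

/-- The eigenvalue `λ4(x) = x_1 + x_2 + √2 ‖x̄‖`. -/
def lam4 {n : ℕ} (x : Fin (n + 2) → ℝ) : ℝ := x 0 + x 1 + Real.sqrt 2 * euclNorm (tl x)

/-- The Jordan-type product `x ◇ s`. -/
def diam {n : ℕ} (x s : Fin (n + 2) → ℝ) : Fin (n + 2) → ℝ :=
  fun i =>
    if (i : ℕ) = 0 then dotp x s
    else if (i : ℕ) = 1 then x 1 * s 0 + x 0 * s 1 + dotp (tl x) (tl s)
    else (s 0 + s 1) * x i + (x 0 + x 1) * s i

/-- The trace `Tr(x) = 2 x_1`. -/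
def trace {n : ℕ} (x : Fin (n + 2) → ℝ) : ℝ := 2 * x 0

/-- `det̄(x) = (x_1 + x_2)² - 2 ‖x̄‖²`. -/
def detbar {n : ℕ} (x : Fin (n + 2) → ℝ) : ℝ := (x 0 + x 1) ^ 2 - 2 * (euclNorm (tl x)) ^ 2

/-- `det(x) = x_1² + x_2² - ‖x̄‖²`. -/
def det2 {n : ℕ} (x : Fin (n + 2) → ℝ) : ℝ := (x 0) ^ 2 + (x 1) ^ 2 - (euclNorm (tl x)) ^ 2

/-- `det_(x) = 2 x_1 x_2 - ‖x̄‖²`. -/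
def detund {n : ℕ} (x : Fin (n + 2) → ℝ) : ℝ := 2 * x 0 * x 1 - (euclNorm (tl x)) ^ 2

/-- Membership in the type-2 second order cone `Υ^n`. -/
def inCone {n : ℕ} (x : Fin (n + 2) → ℝ) : Prop := 0 ≤ lam1 x ∧ 0 ≤ lam2 x

/-- Membership in the interior `Υ^n_+` of the type-2 second order cone. -/
def inConeInt {n : ℕ} (x : Fin (n + 2) → ℝ) : Prop := 0 < lam1 x ∧ 0 < lam2 x

/-- The unit element `e = (1, 0, …, 0)`. -/
def eVec {n : ℕ} : Fin (n + 2) → ℝ := fun i => if (i : ℕ) = 0 then 1 else 0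

/-- The spectral vector `g(x) = g(λ1(x)) v1 + g(λ2(x)) v2 + g(λ4(x)) v4`.
Its tail entries are `(g(λ4(x)) - g(λ2(x))) xᵢ / (2√2 ‖x̄‖)` when `x̄ ≠ 0`;
when `x̄ = 0` the written formula evaluates to `0` automatically since then
`xᵢ = 0` for `i ≥ 2`. -/
def specVec {n : ℕ} (g : ℝ → ℝ) (x : Fin (n + 2) → ℝ) : Fin (n + 2) → ℝ :=
  fun i =>
    if (i : ℕ) = 0 then (1 / 2) * g (lam1 x) + (1 / 4) * g (lam2 x) + (1 / 4) * g (lam4 x)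
    else if (i : ℕ) = 1 then -(1 / 2) * g (lam1 x) + (1 / 4) * g (lam2 x) + (1 / 4) * g (lam4 x)
    else (g (lam4 x) - g (lam2 x)) * x i / (2 * Real.sqrt 2 * euclNorm (tl x))

/-- The barrier value `Ψ(x) = ψ(λ1(x)) + ½ψ(λ2(x)) + ½ψ(λ4(x))`. -/
def Psi {n : ℕ} (g : ℝ → ℝ) (x : Fin (n + 2) → ℝ) : ℝ :=
  g (lam1 x) + (1 / 2) * g (lam2 x) + (1 / 2) * g (lam4 x)

/-- The barrier value of a block vector. -/
def PsiBlk {N : ℕ} {nf : Fin N → ℕ} (g : ℝ → ℝ) (v : ∀ j, Fin (nf j + 2) → ℝ) : ℝ :=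
  ∑ j, Psi g (v j)

/-- The norm-based proximity `δ(v) = (1/√2) (Σⱼ ‖ψ'(vʲ)‖²)^{1/2}`. -/
def deltaBlk {N : ℕ} {nf : Fin N → ℕ} (g : ℝ → ℝ) (v : ∀ j, Fin (nf j + 2) → ℝ) : ℝ :=
  (1 / Real.sqrt 2) * Real.sqrt (∑ j, (euclNorm (specVec g (v j))) ^ 2)

/-- `λ_min(v) = minⱼ min{λ1(vʲ), λ2(vʲ)}`. -/
def lamMin {N : ℕ} {nf : Fin N → ℕ} (v : ∀ j, Fin (nf j + 2) → ℝ) : ℝ :=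
  ⨅ j, min (lam1 (v j)) (lam2 (v j))


lemma dot_split {n : ℕ} (x s : Fin (n + 2) → ℝ) :
    dotp x s = x 0 * s 0 + x 1 * s 1 + dotp (tl x) (tl s) := by
  unfold dotp tl
  have h : ∀ i : Fin (n + 2), x i * s i =
      (if 2 ≤ (i : ℕ) then x i else 0) * (if 2 ≤ (i : ℕ) then s i else 0) +
      ((if i = (0 : Fin (n+2)) then x 0 * s 0 else 0) +
       (if i = (1 : Fin (n+2)) then x 1 * s 1 else 0)) := by
    intro i
    rcases Nat.lt_or_ge (i : ℕ) 2 with h2 | h2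
    · interval_cases h : (i : ℕ)
      · have : i = 0 := by ext; simp [h]
        subst this; simp
      · have : i = 1 := by ext; simp [h]
        subst this; simp
    · have h0 : i ≠ 0 := by intro hi; subst hi; simp at h2
      have h1 : i ≠ 1 := by intro hi; subst hi; simp at h2
      simp [h2, h0, h1]
  rw [Finset.sum_congr rfl (fun i _ => h i), Finset.sum_add_distrib,
    Finset.sum_add_distrib, Finset.sum_ite_eq' Finset.univ (0 : Fin (n+2)),
    Finset.sum_ite_eq' Finset.univ (1 : Fin (n+2))]
  simp
  ring

lemma cs_tail {n : ℕ} (x s : Fin (n + 2) → ℝ) :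
    |dotp (tl x) (tl s)| ≤ euclNorm (tl x) * euclNorm (tl s) := by
  have h := Finset.sum_mul_sq_le_sq_mul_sq (Finset.univ : Finset (Fin (n+2))) (tl x) (tl s)
  have := Real.sqrt_le_sqrt h
  rw [Real.sqrt_sq_eq_abs, Real.sqrt_mul (Finset.sum_nonneg fun i _ => sq_nonneg _)] at this
  exact this

/-- `(1/2)[λ2(x)λ4(s) + λ4(x)λ2(s)] ≤ Tr(x ◇ s) - λ1(x)λ1(s)
≤ (1/2)[λ2(x)λ2(s) + λ4(x)λ4(s)]`. -/
theorem stmt3 (n : ℕ) (x s : Fin (n + 2) → ℝ) :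
    (1 / 2) * (lam2 x * lam4 s + lam4 x * lam2 s) ≤ trace (diam x s) - lam1 x * lam1 s ∧
    trace (diam x s) - lam1 x * lam1 s ≤ (1 / 2) * (lam2 x * lam2 s + lam4 x * lam4 s) := by
  have hd := dot_split x s
  have hcs := cs_tail x s
  have ht : trace (diam x s) = 2 * dotp x s := by
    unfold trace diam; norm_num
  have hX : (0:ℝ) ≤ euclNorm (tl x) := Real.sqrt_nonneg _
  have hS : (0:ℝ) ≤ euclNorm (tl s) := Real.sqrt_nonneg _
  have hr : Real.sqrt 2 * Real.sqrt 2 = 2 := Real.mul_self_sqrt (by norm_num)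
  rw [abs_le] at hcs
  unfold lam1 lam2 lam4 at *
  constructor <;> nlinarith [hcs.1, hcs.2, hr, hd, ht]


end
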